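/- Let (M,ω,Φ) satisfy the q-Hamiltonian Dirac condition, i.e. the pair (dΦ, ω) defines a strong Dirac morphism (TM⊕T*M, TM) ⇢ (TG⊕T*G, E_G) where E_G is the Cartan-Dirac structure. Then for connected M, dim M is even if and only if det(Ad_{Φ(m)}) = 1 for all m ∈ M. (Pointwise version: if (Θ,ω): (V⊕V*, V) ⇢ (𝔤⊕𝔤*, E_A) is a strong Dirac morphism where E_A is the Lagrangian subspace corresponding to A ∈ O(𝔤), then dim V is even iff det(A) = 1.) -/

import Mathlib

/-! The forward image of `V` under `(Θ, ω)` meets `𝔤 × 0` in `Θ (ker ω) × 0`, and the strong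
condition makes `Θ` injective on `ker ω`; on the other hand `E_A ∩ (𝔤 × 0) ≅ ker (A + 1)`. Hence
`dim ker ω = dim ker (A + 1)`. Since `ω` is alternating it is nondegenerate on a complement of
its kernel, so `dim V ≡ dim ker ω (mod 2)`. Finally `det A = (-1) ^ dim ker (A + 1)` for
orthogonal `A`: the complement `ker (A + 1)ᗮ` is invariant and contains the range of `A + 1`, so
`A` induces `-1` on the quotient by it, while on it `A (1 + A⁻¹) = A + 1` with
`1 + A⁻¹ = (A + 1)ᵀ` invertible, which forces determinant `1`. -/

open RealInnerProductSpace

/-- The split symmetric pairing on `V ⊕ V* ≅ V ⊕ V`, where `V*` is identified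
with `V` via the inner product. -/
def diracPairE {V : Type*} [NormedAddCommGroup V] [InnerProductSpace ℝ V]
    (x y : V × V) : ℝ :=
  ⟪x.2, y.1⟫ + ⟪y.2, x.1⟫

/-- A subspace of `V ⊕ V* ≅ V ⊕ V` is Lagrangian iff it coincides with its
orthogonal relative to the split pairing. -/
def IsLagrangianE {V : Type*} [NormedAddCommGroup V] [InnerProductSpace ℝ V]
    (E : Submodule ℝ (V × V)) : Prop :=
  ∀ x, (∀ y ∈ E, diracPairE x y = 0) ↔ x ∈ E

/-- The Lagrangian subspace `E_A = {((I - A⁻¹)v, (I + A⁻¹)v/2) : v ∈ V}`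
associated to an orthogonal transformation `A ∈ O(V)`. -/
noncomputable def lagrangianOf {V : Type*} [NormedAddCommGroup V] [InnerProductSpace ℝ V]
    (A : V ≃ₗᵢ[ℝ] V) : Submodule ℝ (V × V) :=
  LinearMap.range (LinearMap.prod
    (LinearMap.id - A.symm.toLinearEquiv.toLinearMap)
    ((2⁻¹ : ℝ) • (LinearMap.id + A.symm.toLinearEquiv.toLinearMap)))

/-- The relation defined by a morphism `(Θ, ω) : V ⊕ V* ⇢ 𝔤 ⊕ 𝔤* ≅ 𝔤 ⊕ 𝔤`:
`(v, α) ∼ (w, β)` iff `w = Θv` and `α = ι_v ω + Θ*β`. -/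
def mixedRel {V G : Type*} [AddCommGroup V] [Module ℝ V]
    [NormedAddCommGroup G] [InnerProductSpace ℝ G]
    (Θ : V →ₗ[ℝ] G) (ω : V →ₗ[ℝ] Module.Dual ℝ V)
    (x : V × Module.Dual ℝ V) (y : G × G) : Prop :=
  y.1 = Θ x.1 ∧ ∀ u : V, x.2 u = ω x.1 u + ⟪y.2, Θ u⟫

open Module Matrix

namespace LinearMap.BilinForm

variable {K V : Type*} [Field K] [AddCommGroup V] [Module K V]
  {B : LinearMap.BilinForm K V}

theorem IsAlt.even_finrank_of_nondegenerate [FiniteDimensional K V] (hK : ringChar K ≠ 2)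
    (hB : B.IsAlt) (hnd : B.Nondegenerate) : Even (finrank K V) := by
  classical
  set M := BilinForm.toMatrix (finBasis K V) B
  have hskew : Mᵀ = -M := by
    ext i j
    exact (hB.neg_eq _ _).symm
  have hdet : M.det ≠ 0 := (nondegenerate_iff_det_ne_zero _).1 hnd
  have hsign : (-1 : K) ^ finrank K V = 1 := by
    apply mul_right_cancel₀ hdet
    calc (-1) ^ finrank K V * M.det = (-M).det := by rw [det_neg, Fintype.card_fin]
      _ = 1 * M.det := by rw [← hskew, det_transpose, one_mul]
  exact (neg_one_pow_eq_one_iff_even (Ring.neg_one_ne_one_of_char_ne_two hK)).1 hsign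

theorem IsAlt.nondegenerate_restrict_of_isCompl_ker (hB : B.IsAlt) {W : Submodule K V}
    (hW : IsCompl (LinearMap.ker B) W) : (B.restrict W).Nondegenerate := by
  refine nondegenerate_restrict_of_disjoint_orthogonal B hB.isRefl <| Submodule.disjoint_def.2 ?_
  intro w hwW hwo
  have hflip_w : LinearMap.ker B ⊔ W ≤ LinearMap.ker (B.flip w) :=
    sup_le (fun k hk => by simp [LinearMap.mem_ker.1 hk]) fun n hn => hwo n hn
  rw [hW.sup_eq_top, top_le_iff, LinearMap.ker_eq_top] at hflip_w
  refine Submodule.disjoint_def.1 hW.disjoint w ?_ hwW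
  ext u
  exact hB.isRefl _ _ (LinearMap.congr_fun hflip_w u)

theorem IsAlt.even_finrank_iff_even_finrank_ker [FiniteDimensional K V] (hK : ringChar K ≠ 2)
    (hB : B.IsAlt) :
    Even (finrank K V) ↔ Even (finrank K (LinearMap.ker B)) := by
  obtain ⟨W, hW⟩ := (LinearMap.ker B).exists_isCompl
  have hWeven : Even (finrank K W) :=
    IsAlt.even_finrank_of_nondegenerate hK (fun w => hB w)
      (hB.nondegenerate_restrict_of_isCompl_ker hW)
  rw [← Submodule.finrank_add_eq_of_isCompl hW, Nat.even_add]
  tauto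

end LinearMap.BilinForm

theorem LinearMap.det_adjoint {𝕜 E : Type*} [RCLike 𝕜] [NormedAddCommGroup E]
    [InnerProductSpace 𝕜 E] [FiniteDimensional 𝕜 E] (f : E →ₗ[𝕜] E) :
    (LinearMap.adjoint f).det = star f.det := by
  let b := stdOrthonormalBasis 𝕜 E
  rw [← det_toMatrix b.toBasis, ← det_toMatrix b.toBasis, toMatrix_adjoint,
    Matrix.det_conjTranspose]

theorem Submodule.finrank_map_of_disjoint_ker {K V W : Type*} [DivisionRing K] [AddCommGroup V]
    [Module K V] [AddCommGroup W] [Module K W] {f : V →ₗ[K] W} {p : Submodule K V}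
    (h : Disjoint p (LinearMap.ker f)) : finrank K (p.map f) = finrank K p := by
  rw [← LinearMap.range_domRestrict]
  exact LinearMap.finrank_range_of_inj (LinearMap.injective_domRestrict_iff.2 h)

theorem LinearMap.adjoint_comp_self_of_inner_map_map {𝕜 E : Type*} [RCLike 𝕜]
    [NormedAddCommGroup E] [InnerProductSpace 𝕜 E] [FiniteDimensional 𝕜 E] {f : E →ₗ[𝕜] E}
    (hf : ∀ x y, inner 𝕜 (f x) (f y) = inner 𝕜 x y) :
    LinearMap.adjoint f ∘ₗ f = 1 := by
  ext x
  refine ext_inner_right 𝕜 fun y => ?_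
  rw [LinearMap.comp_apply, LinearMap.adjoint_inner_left, hf, Module.End.one_apply]

section InnerPreserving

variable {E : Type*} [NormedAddCommGroup E] [InnerProductSpace ℝ E] {f : E →ₗ[ℝ] E}

theorem LinearMap.det_eq_one_of_ker_add_one_eq_bot [FiniteDimensional ℝ E]
    (hf : ∀ x y, ⟪f x, f y⟫ = ⟪x, y⟫)
    (hker : LinearMap.ker (f + 1) = ⊥) : f.det = 1 := by
  set g := LinearMap.adjoint f
  have hgf : g ∘ₗ f = 1 := LinearMap.adjoint_comp_self_of_inner_map_map hf
  have hadj : g ∘ₗ (f + 1) = LinearMap.adjoint (f + 1) := by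
    rw [LinearMap.comp_add, hgf, map_add, Module.End.one_eq_id, LinearMap.comp_id,
      LinearMap.adjoint_id, add_comm]
  have hunit : (f + 1).det ≠ 0 :=
    (LinearMap.isUnit_det _ ((LinearMap.isUnit_iff_ker_eq_bot _).2 hker)).ne_zero
  have hg : g.det = 1 := by
    have := congrArg LinearMap.det hadj
    rw [LinearMap.det_comp, LinearMap.det_adjoint (f + 1), star_trivial] at this
    exact (mul_eq_right₀ hunit).1 this
  have := congrArg LinearMap.det hgf
  rwa [LinearMap.det_comp, hg, one_mul, map_one] at this

theorem LinearMap.range_add_one_le_orthogonal_ker (hf : ∀ x y, ⟪f x, f y⟫ = ⟪x, y⟫) :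
    LinearMap.range (f + 1) ≤ (LinearMap.ker (f + 1))ᗮ := by
  rintro _ ⟨y, rfl⟩
  refine (Submodule.mem_orthogonal _ _).2 fun u hu => ?_
  have hfu : f u = -u := eq_neg_of_add_eq_zero_left hu
  calc ⟪u, (f + 1) y⟫ = -⟪f u, f y⟫ + ⟪u, y⟫ := by
        rw [hfu, inner_neg_left, neg_neg, LinearMap.add_apply, Module.End.one_apply,
          inner_add_right]
    _ = 0 := by rw [hf, neg_add_cancel]

theorem LinearMap.det_eq_neg_one_pow_finrank_ker_add_one [FiniteDimensional ℝ E]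
    (hf : ∀ x y, ⟪f x, f y⟫ = ⟪x, y⟫) :
    f.det = (-1) ^ finrank ℝ (LinearMap.ker (f + 1)) := by
  set K := LinearMap.ker (f + 1)
  have hrange := LinearMap.range_add_one_le_orthogonal_ker hf
  have hinv : Kᗮ ≤ Kᗮ.comap f := fun y hy => by
    have hfy : f y = (f + 1) y - y := by simp
    rw [Submodule.mem_comap, hfy]
    exact Kᗮ.sub_mem (hrange ⟨y, rfl⟩) hy
  have hrestrict : (f.restrict hinv).det = 1 := by
    refine LinearMap.det_eq_one_of_ker_add_one_eq_bot (fun x y => hf x y) ?_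
    refine LinearMap.ker_eq_bot'.2 fun x hx => ?_
    have hxK : (x : E) ∈ K := congrArg Subtype.val hx
    exact Subtype.ext (Submodule.disjoint_def.1 K.orthogonal_disjoint x hxK x.2)
  have hquot : Kᗮ.mapQ Kᗮ f hinv = (-1 : ℝ) • 1 := by
    ext y
    simp only [LinearMap.comp_apply, LinearMap.smul_apply, Module.End.one_apply, neg_one_smul]
    rw [Submodule.mkQ_apply, Submodule.mapQ_apply, ← Submodule.Quotient.mk_neg,
      Submodule.Quotient.eq, sub_neg_eq_add]
    exact hrange ⟨y, rfl⟩
  have hcompl : IsCompl Kᗮ K := K.isCompl_orthogonal.symm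
  rw [f.det_eq_det_mul_det Kᗮ hinv, hrestrict, hquot, one_mul, LinearMap.det_smul, map_one,
    mul_one, (Submodule.quotientEquivOfIsCompl Kᗮ K hcompl).finrank_eq]

end InnerPreserving

section Lagrangian

variable {G : Type*} [NormedAddCommGroup G] [InnerProductSpace ℝ G]

theorem finrank_lagrangianOf_inf_prod_bot (A : G ≃ₗᵢ[ℝ] G) :
    finrank ℝ ↥(lagrangianOf A ⊓ (⊤ : Submodule ℝ G).prod ⊥)
      = finrank ℝ (LinearMap.ker (A.toLinearEquiv.toLinearMap + 1)) := by
  set a := A.symm.toLinearEquiv.toLinearMap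
  set L := (LinearMap.id - a).prod ((2⁻¹ : ℝ) • (LinearMap.id + a))
  have hL : LinearMap.ker L = ⊥ := by
    refine LinearMap.ker_eq_bot'.2 fun ξ hξ => ?_
    have h₁ : ξ - a ξ = 0 := congrArg Prod.fst hξ
    have h₂ : (2⁻¹ : ℝ) • (ξ + a ξ) = 0 := congrArg Prod.snd hξ
    have hξ_eq : ξ = (2⁻¹ : ℝ) • (ξ - a ξ) + (2⁻¹ : ℝ) • (ξ + a ξ) := by module
    rw [hξ_eq, h₁, h₂, smul_zero, add_zero]
  have hsnd : (⊤ : Submodule ℝ G).prod ⊥ = LinearMap.ker (LinearMap.snd ℝ G G) := by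
    ext; simp
  have hA : A.toLinearEquiv.toLinearMap ∘ₗ (LinearMap.id + a)
      = A.toLinearEquiv.toLinearMap + 1 := by
    ext ξ
    simp [a, add_comm]
  rw [lagrangianOf, hsnd, ← Submodule.map_comap_eq, Submodule.finrank_map_of_disjoint_ker
    (hL ▸ disjoint_bot_right), ← LinearMap.ker_comp, LinearMap.snd_prod,
    LinearMap.ker_smul _ _ (by norm_num), ← hA, LinearMap.ker_comp_of_ker_eq_bot _
    (LinearMap.ker_eq_bot.2 A.injective)]

end Lagrangian

section DiracMorphism

variable {V G : Type*} [AddCommGroup V] [Module ℝ V] [NormedAddCommGroup G]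
  [InnerProductSpace ℝ G] {Θ : V →ₗ[ℝ] G} {ω : V →ₗ[ℝ] Module.Dual ℝ V}

def forwardImage (Θ : V →ₗ[ℝ] G) (ω : V →ₗ[ℝ] Module.Dual ℝ V) : Set (G × G) :=
  {y | ∃ x ∈ (⊤ : Submodule ℝ V).prod (⊥ : Submodule ℝ (Module.Dual ℝ V)), mixedRel Θ ω x y}

theorem mixedRel_zero_zero_iff {v : V} {w : G} :
    mixedRel Θ ω (v, 0) (w, 0) ↔ w = Θ v ∧ ω v = 0 := by
  simp only [mixedRel, inner_zero_left, add_zero, LinearMap.zero_apply, eq_comm (a := (0 : ℝ)),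
    LinearMap.ext_iff]

theorem inf_prod_bot_eq_map_ker {E : Submodule ℝ (G × G)}
    (hfwd : (E : Set (G × G)) = forwardImage Θ ω) :
    E ⊓ (⊤ : Submodule ℝ G).prod ⊥ = (LinearMap.ker ω).map (LinearMap.inl ℝ G G ∘ₗ Θ) := by
  ext ⟨w, β⟩
  simp only [Submodule.mem_inf, Submodule.mem_prod, Submodule.mem_top, Submodule.mem_bot,
    true_and, Submodule.mem_map, LinearMap.mem_ker, LinearMap.comp_apply, LinearMap.inl_apply,
    Prod.mk.injEq]
  rw [← SetLike.mem_coe, hfwd]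
  constructor
  · rintro ⟨⟨⟨v, α⟩, ⟨-, hα⟩, hrel⟩, rfl⟩
    obtain rfl : α = 0 := (Submodule.mem_bot ℝ).1 hα
    obtain ⟨rfl, hv⟩ := mixedRel_zero_zero_iff.1 hrel
    exact ⟨v, hv, rfl, rfl⟩
  · rintro ⟨v, hv, rfl, rfl⟩
    exact ⟨⟨(v, 0), ⟨trivial, rfl⟩, mixedRel_zero_zero_iff.2 ⟨rfl, hv⟩⟩, rfl⟩

theorem disjoint_ker_of_strong
    (hstrong : ∀ x ∈ (⊤ : Submodule ℝ V).prod (⊥ : Submodule ℝ (Module.Dual ℝ V)),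
      mixedRel Θ ω x 0 → x = 0) :
    Disjoint (LinearMap.ker ω) (LinearMap.ker Θ) := by
  refine Submodule.disjoint_def.2 fun v hω hΘ => ?_
  exact congrArg Prod.fst <|
    hstrong (v, 0) ⟨trivial, rfl⟩ (mixedRel_zero_zero_iff.2 ⟨hΘ.symm, hω⟩)

theorem finrank_ker_eq_finrank_inf_prod_bot {E : Submodule ℝ (G × G)}
    (hfwd : (E : Set (G × G)) = forwardImage Θ ω)
    (hstrong : ∀ x ∈ (⊤ : Submodule ℝ V).prod (⊥ : Submodule ℝ (Module.Dual ℝ V)),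
      mixedRel Θ ω x 0 → x = 0) :
    finrank ℝ (LinearMap.ker ω) = finrank ℝ ↥(E ⊓ (⊤ : Submodule ℝ G).prod ⊥) := by
  rw [inf_prod_bot_eq_map_ker hfwd, Submodule.finrank_map_of_disjoint_ker]
  rw [LinearMap.ker_comp_of_ker_eq_bot _ Submodule.ker_inl]
  exact disjoint_ker_of_strong hstrong

end DiracMorphism

/-- pointwise version of the q-Hamiltonian parity result: if
`(Θ, ω) : (V ⊕ V*, V) ⇢ (𝔤 ⊕ 𝔤*, E_A)` is a strong Dirac morphism, where `E_A` is the
Lagrangian subspace corresponding to `A ∈ O(𝔤)`, then `dim V` is even iff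
`det A = 1`. -/
theorem qHamiltonian_parity
    {V G : Type*} [AddCommGroup V] [Module ℝ V] [FiniteDimensional ℝ V]
    [NormedAddCommGroup G] [InnerProductSpace ℝ G] [FiniteDimensional ℝ G]
    (A : G ≃ₗᵢ[ℝ] G)
    (Θ : V →ₗ[ℝ] G) (ω : V →ₗ[ℝ] Module.Dual ℝ V) (hω : ∀ v, ω v v = 0)
    (hfwd : (lagrangianOf A : Set (G × G))
      = {y | ∃ x ∈ (⊤ : Submodule ℝ V).prod (⊥ : Submodule ℝ (Module.Dual ℝ V)),
          mixedRel Θ ω x y})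
    (hstrong : ∀ x ∈ (⊤ : Submodule ℝ V).prod (⊥ : Submodule ℝ (Module.Dual ℝ V)),
      mixedRel Θ ω x 0 → x = 0) :
    Even (Module.finrank ℝ V) ↔ LinearMap.det A.toLinearEquiv.toLinearMap = 1 := by
  have hdim : finrank ℝ (LinearMap.ker ω)
      = finrank ℝ (LinearMap.ker (A.toLinearEquiv.toLinearMap + 1)) := by
    rw [finrank_ker_eq_finrank_inf_prod_bot hfwd hstrong, finrank_lagrangianOf_inf_prod_bot]
  have hωalt : LinearMap.BilinForm.IsAlt ω := hω
  rw [hωalt.even_finrank_iff_even_finrank_ker (by simp [ringChar.eq_zero]), hdim,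
    LinearMap.det_eq_neg_one_pow_finrank_ker_add_one A.inner_map_map,
    neg_one_pow_eq_one_iff_even (by norm_num)]
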